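/- arXiv:2311.18652 — 2 statements merged into one kernel-verified Lean document; each statement's English description precedes it below -/
import Mathlib

section
/- Define b_DF(d) := −(1/(2^{d+1} π^{(d−1)/2} Γ((d+1)/2))) · ((d−3)/μ^{(d−1)/2} + 1/(λ+2μ)^{(d−1)/2}) and b_FD(d) := −b_DF(d), where μ > 0 and dλ + 2μ > 0. Then for d = 2 one has b_FD < 0 < b_DF, while for every integer d ≥ 3 one has b_DF < 0 < b_FD. -/
/-- The second Weyl coefficient density `b_DF(d)` for Dirichlet-free boundary
conditions. -/
noncomputable def bDF (lam mu : ℝ) (d : ℕ) : ℝ :=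
  -(1 / (2 ^ (d + 1) * Real.pi ^ (((d : ℝ) - 1) / 2) * Real.Gamma (((d : ℝ) + 1) / 2)))
    * (((d : ℝ) - 3) / mu ^ (((d : ℝ) - 1) / 2) + 1 / (lam + 2 * mu) ^ (((d : ℝ) - 1) / 2))

/-- The second Weyl coefficient density `b_FD(d)` for free-Dirichlet boundary
conditions. -/
noncomputable def bFD (lam mu : ℝ) (d : ℕ) : ℝ := -(bDF lam mu d)

/-!
The prefactor `1 / (2^{d+1} π^{(d-1)/2} Γ((d+1)/2))` is positive, so the sign of `b_DF` is
the opposite of that of `(d-3) μ^{-(d-1)/2} + (λ+2μ)^{-(d-1)/2}`. For `d ≥ 3` both terms are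
nonnegative and the second is positive, since `d (λ+2μ) = (dλ+2μ) + 2(d-1)μ > 0`. For `d = 2`
the bracket is `(λ+2μ)^{-1/2} - μ^{-1/2}`, negative because `λ + 2μ > μ` when `2λ + 2μ > 0`.
-/

open Real

lemma weyl_prefactor_pos (d : ℕ) :
    0 < 1 / (2 ^ (d + 1) * π ^ (((d : ℝ) - 1) / 2) * Gamma (((d : ℝ) + 1) / 2)) :=
  one_div_pos.2 <| mul_pos (by positivity) (Gamma_pos_of_pos (by positivity))

lemma add_two_mul_pos_of_mul_add_two_mul_pos {d lam mu : ℝ} (hd : 1 ≤ d) (hmu : 0 ≤ mu)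
    (h : 0 < d * lam + 2 * mu) : 0 < lam + 2 * mu := by
  have hdpos : 0 < d * (lam + 2 * mu) := by
    have : 0 ≤ (d - 1) * mu := mul_nonneg (by linarith) hmu
    linarith
  exact pos_of_mul_pos_right hdpos (by linarith)

lemma bDF_two_pos {lam mu : ℝ} (hmu : 0 < mu) (hlm : mu < lam + 2 * mu) :
    0 < bDF lam mu 2 := by
  have hbracket : 1 / (lam + 2 * mu) ^ (1 / 2 : ℝ) < 1 / mu ^ (1 / 2 : ℝ) :=
    one_div_lt_one_div_of_lt (rpow_pos_of_pos hmu _) (rpow_lt_rpow hmu.le hlm (by norm_num))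
  refine mul_pos_of_neg_of_neg (neg_neg_of_pos (weyl_prefactor_pos 2)) ?_
  norm_num [neg_div] at hbracket ⊢
  linarith

lemma bDF_neg_of_three_le {lam mu : ℝ} {d : ℕ} (hmu : 0 < mu) (hd : 3 ≤ d)
    (hlm : 0 < lam + 2 * mu) : bDF lam mu d < 0 := by
  have hd' : (3 : ℝ) ≤ d := by exact_mod_cast hd
  have hbracket : 0 < ((d : ℝ) - 3) / mu ^ (((d : ℝ) - 1) / 2)
      + 1 / (lam + 2 * mu) ^ (((d : ℝ) - 1) / 2) :=
    add_pos_of_nonneg_of_pos (div_nonneg (by linarith) (rpow_pos_of_pos hmu _).le)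
      (one_div_pos.2 (rpow_pos_of_pos hlm _))
  exact mul_neg_of_neg_of_pos (neg_neg_of_pos (weyl_prefactor_pos d)) hbracket

/-- Sign of the second Weyl coefficients: for `d = 2` one has `b_FD < 0 < b_DF`,
whereas for every integer `d ≥ 3` one has `b_DF < 0 < b_FD`, assuming `μ > 0` and
`dλ + 2μ > 0`. -/
theorem bDF_bFD_signs (lam mu : ℝ) (hmu : 0 < mu) :
    ((0 < 2 * lam + 2 * mu) → bFD lam mu 2 < 0 ∧ 0 < bDF lam mu 2) ∧
    (∀ d : ℕ, 3 ≤ d → 0 < (d : ℝ) * lam + 2 * mu → bDF lam mu d < 0 ∧ 0 < bFD lam mu d) := by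
  refine ⟨fun h => ?_, fun d hd h => ?_⟩
  · have hpos : 0 < bDF lam mu 2 := bDF_two_pos hmu (by linarith)
    exact ⟨neg_neg_of_pos hpos, hpos⟩
  · have hlm : 0 < lam + 2 * mu :=
      add_two_mul_pos_of_mul_add_two_mul_pos (Nat.one_le_cast.2 (by omega)) hmu.le h
    have hneg : bDF lam mu d < 0 := bDF_neg_of_three_le hmu hd hlm
    exact ⟨hneg, neg_pos_of_neg hneg⟩
end

section
/- For real a > 0, ∑_{n=1}^{⌊√x⌋} a·√(x − n²) = (πa/4)·x − (a/2)·√x + O(x^{1/4}·√(√x)) = (πa/4)x − (a/2)√x + o(√x) as x → +∞. -/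
/-!
The function `f t = √(x - t²)` is concave on `[-√x, √x]` and `∫₀^{√x} f = π x / 4`. For a
concave function the trapezoid rule underestimates and the midpoint rule overestimates the
integral, so with `N = ⌊√x⌋` the lattice sum `∑_{n=1}^{N} f n` lies within `O(x^{1/4})` of
`π x / 4 - √x / 2`: the term `√x / 2` is half the endpoint value `f 0` in the trapezoid rule, and
the error comes from the last unit interval below `√x`, on which `f ≤ 2 x^{1/4}`.
-/

open Filter Finset MeasureTheory Real

section Concave

variable {f : ℝ → ℝ} {a b c C : ℝ} {n : ℕ}

theorem intervalIntegral.integral_eq_half_integral_add_reflect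
    (hf : IntervalIntegrable f volume a b) :
    ∫ t in a..b, f t = (∫ t in a..b, (f t + f (a + b - t))) / 2 := by
  have hreflect : ∫ t in a..b, f (a + b - t) = ∫ t in a..b, f t := by
    simp [intervalIntegral.integral_comp_sub_left]
  rw [intervalIntegral.integral_add hf (by simpa using (hf.comp_sub_left (a + b)).symm), hreflect]
  ring

theorem intervalIntegral.integral_le_mul_of_le (hab : a ≤ b)
    (hf : IntervalIntegrable f volume a b) (hC : ∀ t ∈ Set.Icc a b, f t ≤ C) :
    ∫ t in a..b, f t ≤ C * (b - a) := by
  have h := intervalIntegral.integral_mono_on hab hf intervalIntegrable_const hC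
  rwa [intervalIntegral.integral_const, smul_eq_mul, mul_comm] at h

theorem ConcaveOn.add_reflect_le_two_mul_midpoint (hf : ConcaveOn ℝ (Set.Icc a b) f)
    {t : ℝ} (ht : t ∈ Set.Icc a b) :
    f t + f (a + b - t) ≤ 2 * f ((a + b) / 2) := by
  have hreflect : a + b - t ∈ Set.Icc a b := ⟨by linarith [ht.2], by linarith [ht.1]⟩
  have h := hf.2 ht hreflect (by norm_num : (0 : ℝ) ≤ 1 / 2) (by norm_num : (0 : ℝ) ≤ 1 / 2)
    (by norm_num)
  simp only [smul_eq_mul] at h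
  rw [show 1 / 2 * t + 1 / 2 * (a + b - t) = (a + b) / 2 by ring] at h
  linarith

theorem ConcaveOn.add_endpoints_le_add_reflect (hf : ConcaveOn ℝ (Set.Icc a b) f)
    {t : ℝ} (ht : t ∈ Set.Icc a b) :
    f a + f b ≤ f t + f (a + b - t) := by
  obtain ⟨hat, htb⟩ := ht
  rcases (hat.trans htb).eq_or_lt with rfl | hab
  · obtain rfl := le_antisymm htb hat
    simp
  obtain ⟨θ, hθ⟩ : ∃ θ, θ = (b - t) / (b - a) := ⟨_, rfl⟩
  have hθ0 : 0 ≤ θ := hθ ▸ div_nonneg (by linarith) (by linarith)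
  have hθ1 : θ ≤ 1 := hθ ▸ (div_le_one (by linarith)).mpr (by linarith)
  have hθt : θ * a + (1 - θ) * b = t := by rw [hθ]; field_simp; ring
  have ha : a ∈ Set.Icc a b := ⟨le_rfl, hab.le⟩
  have hb : b ∈ Set.Icc a b := ⟨hab.le, le_rfl⟩
  have h₁ := hf.2 ha hb hθ0 (sub_nonneg.2 hθ1) (add_sub_cancel θ 1)
  have h₂ := hf.2 ha hb (sub_nonneg.2 hθ1) hθ0 (sub_add_cancel 1 θ)
  simp only [smul_eq_mul] at h₁ h₂
  rw [hθt] at h₁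
  rw [show (1 - θ) * a + θ * b = a + b - t by linarith] at h₂
  linarith

theorem ConcaveOn.integral_le_mul_midpoint (hab : a ≤ b) (hf : ConcaveOn ℝ (Set.Icc a b) f)
    (hfc : ContinuousOn f (Set.Icc a b)) :
    ∫ t in a..b, f t ≤ (b - a) * f ((a + b) / 2) := by
  have hint : IntervalIntegrable f volume a b := hfc.intervalIntegrable_of_Icc hab
  rw [intervalIntegral.integral_eq_half_integral_add_reflect hint]
  have h := intervalIntegral.integral_le_mul_of_le hab
    (hint.add (by simpa using (hint.comp_sub_left (a + b)).symm))
    fun t ht => hf.add_reflect_le_two_mul_midpoint ht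
  linarith

theorem ConcaveOn.mul_trapezoid_le_integral (hab : a ≤ b) (hf : ConcaveOn ℝ (Set.Icc a b) f)
    (hfc : ContinuousOn f (Set.Icc a b)) :
    (b - a) * ((f a + f b) / 2) ≤ ∫ t in a..b, f t := by
  have hint : IntervalIntegrable f volume a b := hfc.intervalIntegrable_of_Icc hab
  rw [intervalIntegral.integral_eq_half_integral_add_reflect hint]
  have h := intervalIntegral.integral_mono_on hab intervalIntegrable_const
    (hint.add (by simpa using (hint.comp_sub_left (a + b)).symm))
    fun t ht => hf.add_endpoints_le_add_reflect ht
  rw [intervalIntegral.integral_const, smul_eq_mul] at h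
  linarith

theorem Set.Icc_add_nat_subset_Icc_add_nat {i : ℕ} (hi : i < n) :
    Set.Icc (c + i) (c + i + 1) ⊆ Set.Icc c (c + n) := by
  have : (i : ℝ) + 1 ≤ n := by exact_mod_cast hi
  exact Set.Icc_subset_Icc (by linarith [(i.cast_nonneg : (0 : ℝ) ≤ i)]) (by linarith)

theorem intervalIntegral.sum_integral_add_nat (hfc : ContinuousOn f (Set.Icc c (c + n))) :
    ∑ i ∈ range n, ∫ t in c + i..c + i + 1, f t = ∫ t in c..c + n, f t := by
  have h := intervalIntegral.sum_integral_adjacent_intervals (a := fun i : ℕ => c + i)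
    (f := f) (μ := volume) (n := n) fun i hi =>
      (hfc.mono (by simpa [add_assoc] using Set.Icc_add_nat_subset_Icc_add_nat (c := c) hi)
        ).intervalIntegrable_of_Icc (by simp)
  simpa only [Nat.cast_zero, add_zero, Nat.cast_add, Nat.cast_one, ← add_assoc] using h

theorem ConcaveOn.sum_trapezoid_le_integral (hf : ConcaveOn ℝ (Set.Icc c (c + n)) f)
    (hfc : ContinuousOn f (Set.Icc c (c + n))) :
    ∑ i ∈ range n, (f (c + i) + f (c + i + 1)) / 2 ≤ ∫ t in c..c + n, f t := by
  rw [← intervalIntegral.sum_integral_add_nat hfc]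
  refine sum_le_sum fun i hi => ?_
  have hsub := Set.Icc_add_nat_subset_Icc_add_nat (c := c) (mem_range.1 hi)
  simpa using (hf.subset hsub (convex_Icc _ _)).mul_trapezoid_le_integral (by linarith)
    (hfc.mono hsub)

theorem ConcaveOn.integral_le_sum_midpoint (hf : ConcaveOn ℝ (Set.Icc c (c + n)) f)
    (hfc : ContinuousOn f (Set.Icc c (c + n))) :
    ∫ t in c..c + n, f t ≤ ∑ i ∈ range n, f (c + i + 1 / 2) := by
  rw [← intervalIntegral.sum_integral_add_nat hfc]
  refine sum_le_sum fun i hi => ?_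
  have hsub := Set.Icc_add_nat_subset_Icc_add_nat (c := c) (mem_range.1 hi)
  have h := (hf.subset hsub (convex_Icc _ _)).integral_le_mul_midpoint (by linarith)
    (hfc.mono hsub)
  rwa [show c + i + 1 - (c + i) = 1 by ring, one_mul,
    show (c + i + (c + i + 1)) / 2 = c + i + 1 / 2 by ring] at h

end Concave

theorem Finset.sum_Icc_one_eq_sum_range {M : Type*} [AddCommMonoid M] (g : ℕ → M) (N : ℕ) :
    ∑ n ∈ Icc 1 N, g n = ∑ i ∈ range N, g (i + 1) := by
  rw [range_eq_Ico, sum_Ico_add' g 0 N 1]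
  rfl

theorem Finset.sum_range_trapezoid (g : ℕ → ℝ) (N : ℕ) :
    ∑ i ∈ range N, (g i + g (i + 1)) / 2 = ∑ n ∈ Icc 1 N, g n + (g 0 - g N) / 2 := by
  rw [sum_Icc_one_eq_sum_range]
  induction N with
  | zero => simp
  | succ N ih => rw [sum_range_succ, sum_range_succ, ih]; ring

section Semicircle

variable {x : ℝ}

theorem concaveOn_sqrt_sub_sq (hx : 0 ≤ x) :
    ConcaveOn ℝ (Set.Icc (-√x) √x) fun t => √(x - t ^ 2) := by
  refine ⟨convex_Icc _ _, fun p hp q hq a b ha hb hab => ?_⟩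
  have hsq {t : ℝ} (ht : t ∈ Set.Icc (-√x) √x) : √(x - t ^ 2) ^ 2 = x - t ^ 2 := by
    refine sq_sqrt (sub_nonneg.2 ?_)
    simpa [sq_sqrt hx] using sq_le_sq' ht.1 ht.2
  simp only [smul_eq_mul]
  refine le_sqrt_of_sq_le ?_
  obtain rfl : b = 1 - a := by linarith
  -- Cauchy–Schwarz for the points `(p, f p)` and `(q, f q)` of the circle of radius `√x`
  nlinarith [hsq hp, hsq hq, mul_nonneg (mul_nonneg ha hb)
    (add_nonneg (sq_nonneg (p - q)) (sq_nonneg (√(x - p ^ 2) - √(x - q ^ 2))))]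

theorem integral_sqrt_sub_sq_eq_pi_div_two_mul (hx : 0 < x) :
    ∫ t in -√x..√x, √(x - t ^ 2) = π / 2 * x := by
  have hs : 0 < √x := sqrt_pos.2 hx
  have hscale (u : ℝ) : √(x - (√x * u) ^ 2) = √x * √(1 - u ^ 2) := by
    rw [mul_pow, sq_sqrt hx.le, ← sqrt_mul hx.le, mul_one_sub]
  have h := intervalIntegral.integral_comp_mul_left (fun t => √(x - t ^ 2)) hs.ne'
    (a := -1) (b := 1)
  simp only [hscale, intervalIntegral.integral_const_mul, integral_sqrt_one_sub_sq, mul_neg,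
    mul_one, smul_eq_mul] at h
  field_simp at h
  rw [sq_sqrt hx.le] at h
  linarith

theorem integral_sqrt_sub_sq_eq_pi_div_four_mul (hx : 0 < x) :
    ∫ t in 0..√x, √(x - t ^ 2) = π / 4 * x := by
  have hc : Continuous fun t : ℝ => √(x - t ^ 2) := by fun_prop
  have hneg := intervalIntegral.integral_comp_neg (a := 0) (b := √x) fun t => √(x - t ^ 2)
  simp only [neg_zero, neg_sq] at hneg
  have h := intervalIntegral.integral_add_adjacent_intervals (μ := volume)
    (hc.intervalIntegrable (-√x) 0) (hc.intervalIntegrable 0 √x)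
  rw [← hneg, integral_sqrt_sub_sq_eq_pi_div_two_mul hx] at h
  linarith

theorem sqrt_sub_sq_le_two_mul_sqrt_sqrt {t : ℝ} (hx : 0 ≤ x) (ht : √x - 2 ≤ t) :
    √(x - t ^ 2) ≤ 2 * √(√x) := by
  rw [show 2 * √(√x) = √(4 * √x) by
    rw [sqrt_mul (by norm_num), show (4 : ℝ) = 2 ^ 2 by norm_num, sqrt_sq (by norm_num)]]
  refine sqrt_le_sqrt ?_
  -- `x - t² = 2√x (√x - t) - (√x - t)²`
  nlinarith [sq_sqrt hx, sq_nonneg (√x - t), sqrt_nonneg x]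

theorem sum_sqrt_sub_sq_le (hx : 0 < x) :
    ∑ n ∈ Icc 1 ⌊√x⌋₊, √(x - (n : ℝ) ^ 2) ≤ π / 4 * x - √x / 2 + √(√x) := by
  set N := ⌊√x⌋₊
  have hNs : (N : ℝ) ≤ √x := Nat.floor_le (sqrt_nonneg x)
  have hsN : √x < N + 1 := Nat.lt_floor_add_one √x
  have hc : Continuous fun t : ℝ => √(x - t ^ 2) := by fun_prop
  have hsub : Set.Icc (0 : ℝ) (0 + N) ⊆ Set.Icc (-√x) √x :=
    Set.Icc_subset_Icc (by linarith [sqrt_nonneg x]) (by simpa using hNs)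
  have htrap := ((concaveOn_sqrt_sub_sq hx.le).subset hsub (convex_Icc _ _)
    ).sum_trapezoid_le_integral hc.continuousOn
  have htel := sum_range_trapezoid (fun n : ℕ => √(x - (n : ℝ) ^ 2)) N
  push_cast at htel
  simp only [zero_add] at htrap
  rw [htel, zero_pow two_ne_zero, sub_zero] at htrap
  have hint : ∫ t in (0 : ℝ)..N, √(x - t ^ 2) ≤ π / 4 * x := by
    rw [← integral_sqrt_sub_sq_eq_pi_div_four_mul hx,
      ← intervalIntegral.integral_add_adjacent_intervals (hc.intervalIntegrable 0 N)
        (hc.intervalIntegrable N √x), le_add_iff_nonneg_right]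
    exact intervalIntegral.integral_nonneg hNs fun t _ => sqrt_nonneg _
  have hend := sqrt_sub_sq_le_two_mul_sqrt_sqrt hx.le (t := N) (by linarith)
  linarith

theorem le_sum_sqrt_sub_sq (hx : 1 ≤ x) :
    π / 4 * x - √x / 2 - 3 * √(√x) ≤ ∑ n ∈ Icc 1 ⌊√x⌋₊, √(x - (n : ℝ) ^ 2) := by
  have hx0 : 0 < x := by linarith
  obtain ⟨M, hM⟩ : ∃ M, ⌊√x⌋₊ = M + 1 :=
    Nat.exists_eq_add_one.2 (Nat.floor_pos.2 (one_le_sqrt.2 hx))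
  have hMs : (M : ℝ) + 1 ≤ √x := by exact_mod_cast hM ▸ Nat.floor_le (sqrt_nonneg x)
  have hsM : √x < M + 2 := by
    have h := Nat.lt_floor_add_one √x
    rw [hM] at h
    push_cast at h
    linarith
  have hc : Continuous fun t : ℝ => √(x - t ^ 2) := by fun_prop
  have hsub : Set.Icc (1 / 2 : ℝ) (1 / 2 + M) ⊆ Set.Icc (-√x) √x :=
    Set.Icc_subset_Icc (by linarith) (by linarith)
  have hmid := ((concaveOn_sqrt_sub_sq hx0.le).subset hsub (convex_Icc _ _)
    ).integral_le_sum_midpoint hc.continuousOn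
  have hsum : ∑ i ∈ range M, √(x - (1 / 2 + i + 1 / 2 : ℝ) ^ 2)
      ≤ ∑ n ∈ Icc 1 ⌊√x⌋₊, √(x - (n : ℝ) ^ 2) := by
    rw [hM, sum_Icc_one_eq_sum_range, sum_range_succ]
    refine le_add_of_le_of_nonneg (le_of_eq (sum_congr rfl fun i _ => ?_)) (sqrt_nonneg _)
    push_cast
    ring_nf
  have hhead : ∫ t in (0 : ℝ)..1 / 2, √(x - t ^ 2) ≤ √x * (1 / 2 - 0) :=
    intervalIntegral.integral_le_mul_of_le (by norm_num) (hc.intervalIntegrable _ _)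
      fun t _ => sqrt_le_sqrt (by nlinarith)
  have htail : ∫ t in (1 / 2 + M : ℝ)..√x, √(x - t ^ 2) ≤ 2 * √(√x) * (√x - (1 / 2 + M)) :=
    intervalIntegral.integral_le_mul_of_le (by linarith) (hc.intervalIntegrable _ _)
      fun t ht => sqrt_sub_sq_le_two_mul_sqrt_sqrt hx0.le (by linarith [ht.1])
  have hsplit := integral_sqrt_sub_sq_eq_pi_div_four_mul hx0
  rw [← intervalIntegral.integral_add_adjacent_intervals (hc.intervalIntegrable 0 (1 / 2))
      (hc.intervalIntegrable (1 / 2) √x),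
    ← intervalIntegral.integral_add_adjacent_intervals
      (hc.intervalIntegrable (1 / 2) (1 / 2 + M)) (hc.intervalIntegrable (1 / 2 + M) √x)]
    at hsplit
  nlinarith [sqrt_nonneg (√x)]

theorem abs_sum_sqrt_sub_sq_sub_le (hx : 1 ≤ x) :
    |∑ n ∈ Icc 1 ⌊√x⌋₊, √(x - (n : ℝ) ^ 2) - π / 4 * x + √x / 2| ≤ 3 * √(√x) := by
  have hupper := sum_sqrt_sub_sq_le (x := x) (by linarith)
  have hlower := le_sum_sqrt_sub_sq hx
  rw [abs_le]
  constructor <;> linarith [sqrt_nonneg (√x)]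

end Semicircle

theorem tendsto_sum_sqrt_sub_sq_sub_div_sqrt :
    Tendsto (fun x : ℝ => (∑ n ∈ Icc 1 ⌊√x⌋₊, √(x - (n : ℝ) ^ 2) - π / 4 * x + √x / 2) / √x)
      atTop (nhds 0) := by
  refine squeeze_zero_norm' ?_ ((tendsto_const_nhds (x := (3 : ℝ))).div_atTop
    (tendsto_sqrt_atTop.comp tendsto_sqrt_atTop))
  filter_upwards [eventually_ge_atTop 1] with x hx
  rw [norm_div, Real.norm_eq_abs, Real.norm_eq_abs, abs_of_nonneg (sqrt_nonneg x),
    Function.comp_apply, div_le_div_iff₀ (sqrt_pos.2 (by linarith))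
      (sqrt_pos.2 (sqrt_pos.2 (by linarith)))]
  calc _ ≤ 3 * √(√x) * √(√x) := by gcongr; exact abs_sum_sqrt_sub_sq_sub_le hx
    _ = 3 * √x := by rw [mul_assoc, mul_self_sqrt (sqrt_nonneg x)]

theorem sum_sqrt_riemann_asymptotics_general (a : ℝ) :
    Tendsto (fun x : ℝ =>
      ((∑ n ∈ Finset.Icc 1 ⌊Real.sqrt x⌋₊, a * Real.sqrt (x - (n : ℝ) ^ 2))
        - Real.pi * a / 4 * x + a / 2 * Real.sqrt x) / Real.sqrt x)
      atTop (nhds 0) := by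
  have h := tendsto_sum_sqrt_sub_sq_sub_div_sqrt.const_mul a
  rw [mul_zero] at h
  refine h.congr fun x => ?_
  rw [← mul_sum]
  ring

/-- Riemann-sum asymptotics: for `a > 0`,
`∑_{n=1}^{⌊√x⌋} a√(x−n²) = (πa/4)x − (a/2)√x + o(√x)` as `x → +∞`. -/
theorem sum_sqrt_riemann_asymptotics (a : ℝ) (ha : 0 < a) :
    Tendsto (fun x : ℝ =>
      ((∑ n ∈ Finset.Icc 1 ⌊Real.sqrt x⌋₊, a * Real.sqrt (x - (n : ℝ) ^ 2))
        - Real.pi * a / 4 * x + a / 2 * Real.sqrt x) / Real.sqrt x)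
      atTop (nhds 0) :=
  sum_sqrt_riemann_asymptotics_general a
end
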